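/- arXiv:2207.05125 — 4 statements merged into one kernel-verified Lean document; each statement's English description precedes it below -/
import Mathlib

section
/- For any nonempty open set U of a locally compact second-countable group G and any positive integer ℓ, the collection of closed subsets Λ of G satisfying |Λ ∩ xU| ≤ ℓ for all x ∈ G is closed in the Chabauty–Fell topology on the space of closed subsets of G. -/
open Pointwise Set MeasureTheory Filter Topology
open scoped ENNReal

set_option linter.unusedSectionVars false
set_option linter.unusedVariables false

variable {G : Type*} [TopologicalSpace G] [Group G] [IsTopologicalGroup G]

/-- The space `C(G)` of closed subsets of `G`. -/
def CF (G : Type*) [TopologicalSpace G] := {s : Set G // IsClosed s}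

/-- The subbasis of the Chabauty–Fell topology on `C(G)`: the sets
`O_K = {C | C ∩ K = ∅}` for `K` compact and `O^V = {C | C ∩ V ≠ ∅}` for `V` open. -/
def FellBasis (G : Type*) [TopologicalSpace G] : Set (Set (CF G)) :=
  {U | ∃ K : Set G, IsCompact K ∧ U = {C : CF G | C.1 ∩ K = ∅}} ∪
  {U | ∃ V : Set G, IsOpen V ∧ U = {C : CF G | (C.1 ∩ V).Nonempty}}

/-- The Chabauty–Fell topology. -/
instance : TopologicalSpace (CF G) := TopologicalSpace.generateFrom (FellBasis G)

/-- Left translation of a closed set. -/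
noncomputable def CF.smul (x : G) (C : CF G) : CF G := ⟨x • C.1, C.2.smul x⟩

/-- The hull of a point set `Λ`: the Chabauty–Fell closure of the set of left
translates of `Λ`. -/
def hullSet (Λ : Set G) : Set (CF G) := closure {C : CF G | ∃ x : G, C.1 = x • Λ}

/-- The punctured hull `Ω*(Λ)`: the hull minus the empty set. -/
def phull (Λ : Set G) : Set (CF G) := {C ∈ hullSet Λ | C.1.Nonempty}

/-- The transversal `Ω₀(Λ) = {P ∈ hull : e ∈ P}`. -/
def transv (Λ : Set G) : Set (CF G) := {C ∈ hullSet Λ | (1 : G) ∈ C.1}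

/-- `Λ` is relatively separated: `sup_x |Λ ∩ xU| < ∞` for some nonempty open `U`. -/
def RelSep (Λ : Set G) : Prop :=
  ∃ U : Set G, IsOpen U ∧ U.Nonempty ∧ ∃ ℓ : ℕ, ∀ x : G, (Λ ∩ x • U).encard ≤ ℓ

/-- `Λ` is separated: `|Λ ∩ xU| ≤ 1` for all `x` for some open identity neighborhood. -/
def Separated (Λ : Set G) : Prop :=
  ∃ U : Set G, IsOpen U ∧ (1 : G) ∈ U ∧ ∀ x : G, (Λ ∩ x • U).encard ≤ 1

lemma smul_inter_empty (x : G) (s K : Set G) : (x • s) ∩ K = ∅ ↔ s ∩ (x⁻¹ • K) = ∅ := by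
  have h : (x • s) ∩ K = x • (s ∩ x⁻¹ • K) := by
    rw [Set.smul_set_inter, smul_inv_smul]
  rw [h, Set.smul_set_eq_empty]

lemma smul_inter_nonempty (x : G) (s V : Set G) :
    ((x • s) ∩ V).Nonempty ↔ (s ∩ (x⁻¹ • V)).Nonempty := by
  have h : (x • s) ∩ V = x • (s ∩ x⁻¹ • V) := by
    rw [Set.smul_set_inter, smul_inv_smul]
  rw [h, Set.smul_set_nonempty]

/-- Left translation is continuous for the Chabauty–Fell topology. -/
lemma continuous_CFsmul (x : G) : Continuous (fun C : CF G => CF.smul x C) := by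
  apply continuous_generateFrom_iff.mpr
  rintro U (⟨K, hK, rfl⟩ | ⟨V, hV, rfl⟩)
  · have h : (fun C : CF G => CF.smul x C) ⁻¹' {C : CF G | C.1 ∩ K = ∅}
        = {C : CF G | C.1 ∩ (x⁻¹ • K) = ∅} := by
      ext C; exact smul_inter_empty x C.1 K
    rw [h]
    exact TopologicalSpace.isOpen_generateFrom_of_mem (Or.inl ⟨x⁻¹ • K, hK.smul x⁻¹, rfl⟩)
  · have h : (fun C : CF G => CF.smul x C) ⁻¹' {C : CF G | (C.1 ∩ V).Nonempty}
        = {C : CF G | (C.1 ∩ (x⁻¹ • V)).Nonempty} := by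
      ext C; exact smul_inter_nonempty x C.1 V
    rw [h]
    exact TopologicalSpace.isOpen_generateFrom_of_mem (Or.inr ⟨x⁻¹ • V, hV.smul x⁻¹, rfl⟩)

/-- The hull is invariant under left translations. -/
lemma smul_mem_hullSet {Λ : Set G} {C : CF G} (h : C ∈ hullSet Λ) (x : G) :
    CF.smul x C ∈ hullSet Λ := by
  refine map_mem_closure (continuous_CFsmul x) h ?_
  rintro D ⟨y, hy⟩
  exact ⟨x * y, by simp [CF.smul, hy, mul_smul]⟩

theorem Set.PairwiseDisjoint.encard_le_of_inter_nonempty {ι α : Type*} {s : Set ι}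
    {V : ι → Set α} {S : Set α} (hV : s.PairwiseDisjoint V) (hS : ∀ i ∈ s, (S ∩ V i).Nonempty) :
    s.encard ≤ S.encard := by
  obtain rfl | ⟨i₀, hi₀⟩ := s.eq_empty_or_nonempty
  · simp
  have : Nonempty α := ⟨(hS i₀ hi₀).some⟩
  choose! f hf using hS
  refine Set.encard_le_encard_of_injOn (fun i hi => (hf i hi).1) fun i hi j hj hij => ?_
  exact hV.elim hi hj <| not_disjoint_iff.2 ⟨f i, (hf i hi).2, hij ▸ (hf j hj).2⟩

section

variable {X : Type*} [TopologicalSpace X]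

theorem CF.isOpen_setOf_inter_nonempty {V : Set X} (hV : IsOpen V) :
    IsOpen {C : CF X | (C.1 ∩ V).Nonempty} :=
  TopologicalSpace.isOpen_generateFrom_of_mem (Or.inr ⟨V, hV, rfl⟩)

/-- If `C` has `n + 1` points in `W`, separate them by disjoint open sets inside `W`: every
closed set meeting all of these also has at least `n + 1` points in `W`. -/
theorem CF.isClosed_setOf_encard_inter_le [T2Space X] {W : Set X} (hW : IsOpen W) (n : ℕ) :
    IsClosed {C : CF X | (C.1 ∩ W).encard ≤ n} := by
  refine isOpen_compl_iff.1 <| isOpen_iff_forall_mem_open.2 fun C hC => ?_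
  simp only [mem_compl_iff, mem_ofPred_eq, not_le] at hC
  obtain ⟨t, htC, ht⟩ := Set.exists_subset_encard_eq (Order.add_one_le_of_lt hC)
  have htfin : t.Finite := Set.finite_of_encard_eq_coe (k := n + 1) (by exact_mod_cast ht)
  obtain ⟨V, hV, hVdisj⟩ := htfin.t2_separation
  refine ⟨{D | ∀ p ∈ t, (D.1 ∩ W ∩ V p).Nonempty}, fun D hD => ?_, ?_, fun p hp => ?_⟩
  · simp only [mem_compl_iff, mem_ofPred_eq, not_le]
    calc (n : ℕ∞) < n + 1 := by exact_mod_cast Nat.lt_succ_self n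
      _ = t.encard := ht.symm
      _ ≤ (D.1 ∩ W).encard := hVdisj.encard_le_of_inter_nonempty hD
  · simp only [ofPred_forall, inter_assoc]
    exact htfin.isOpen_biInter fun p _ => isOpen_setOf_inter_nonempty (hW.inter (hV p).2)
  · exact ⟨p, htC hp, (hV p).1⟩

end

theorem statement0_general {G : Type*} [TopologicalSpace G] [Group G] [IsTopologicalGroup G]
    [T2Space G] (U : Set G) (hU : IsOpen U) (ℓ : ℕ) :
    IsClosed {C : CF G | ∀ x : G, (C.1 ∩ x • U).encard ≤ ℓ} := by
  simpa only [ofPred_forall] using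
    isClosed_iInter fun x : G => CF.isClosed_setOf_encard_inter_le (hU.smul x) ℓ

/-- For any nonempty open set `U` of a locally compact second-countable group `G` and any
positive integer `ℓ`, the collection of closed subsets `Λ` of `G` with `|Λ ∩ xU| ≤ ℓ` for
all `x ∈ G` is closed in the Chabauty–Fell topology. -/
theorem statement0 {G : Type*} [TopologicalSpace G] [Group G] [IsTopologicalGroup G]
    [T2Space G] [LocallyCompactSpace G] [SecondCountableTopology G]
    (U : Set G) (hU : IsOpen U) (hUne : U.Nonempty) (ℓ : ℕ) (hℓ : 0 < ℓ) :
    IsClosed {C : CF G | ∀ x : G, (C.1 ∩ x • U).encard ≤ ℓ} :=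
  statement0_general U hU ℓ
end

section
/- Let Λ be an ℓ-relatively U-separated subset of a unimodular locally compact second-countable group G, where U is a symmetric open identity neighborhood and m is a Haar measure. Then for every compact set K ⊆ G and every P in the hull Ω(Λ) (the Chabauty–Fell closure of the set of left translates of Λ), one has |P ∩ K| ≤ ℓ · m(KU)/m(U). -/
/-!
By inner regularity of `m` on `U` it suffices to show `|s| m(C) ≤ ℓ m(KU)` for finite
`s ⊆ P ∩ K` and compact `C ⊆ U`. Choose an identity neighbourhood `W` with `WC ⊆ U`. As `P` is a
Chabauty–Fell limit of translates of `Λ`, some `xΛ` meets pairwise disjoint neighbourhoods of the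
points `f ∈ s` inside `fW`; this gives distinct points `λ_f ∈ xΛ` with `λ_f C ⊆ KU`. A point `g`
lies in `λ_f C` only if `λ_f ∈ xΛ ∩ gU` (`U` is symmetric), so at most `ℓ` of these translates
overlap anywhere, and integrating the sum of their indicators gives the bound.
-/

open Pointwise Set MeasureTheory Filter Topology
open scoped ENNReal

set_option linter.unusedSectionVars false
set_option linter.unusedVariables false

variable {G : Type*} [TopologicalSpace G] [Group G] [IsTopologicalGroup G]

open Finset in
lemma encard_le_of_forall_finset_card_le {α : Type*} {S : Set α} {c : ℝ≥0∞}
    (h : ∀ t : Finset α, ↑t ⊆ S → (#t : ℝ≥0∞) ≤ c) : (S.encard : ℝ≥0∞) ≤ c := by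
  rcases S.finite_or_infinite with hS | hS
  · simpa [hS.encard_eq_coe_toFinset_card] using h hS.toFinset (by simp)
  · suffices c = ⊤ by simp [this]
    refine ENNReal.eq_top_of_forall_nnreal_le fun r => ?_
    obtain ⟨n, hn⟩ := exists_nat_ge r
    obtain ⟨t, htS, rfl⟩ := hS.exists_subset_card_eq n
    exact (ENNReal.coe_le_coe.mpr hn).trans (by simpa using h t htS)

open Finset Classical in
lemma card_mul_measure_le_of_forall_card_le {G : Type*} [Group G] [MeasurableSpace G]
    [MeasurableMul G] (m : Measure G) [m.IsMulLeftInvariant] {t : Finset G} {V T : Set G}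
    (hV : MeasurableSet V) (hT : MeasurableSet T) (hsub : ∀ f ∈ t, f • V ⊆ T) {ℓ : ℕ}
    (hcount : ∀ g : G, #{f ∈ t | g ∈ f • V} ≤ ℓ) :
    #t * m V ≤ ℓ * m T := by
  have pointwise (g : G) :
      ∑ f ∈ t, (f • V).indicator 1 g ≤ T.indicator (fun _ => (ℓ : ℝ≥0∞)) g := by
    by_cases hg : g ∈ T
    · simpa [Set.indicator_apply, hg, Finset.sum_boole] using hcount g
    · rw [Set.indicator_of_notMem hg]
      exact (Finset.sum_eq_zero fun f hf =>
        Set.indicator_of_notMem (fun hgf => hg (hsub f hf hgf)) _).le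
  calc #t * m V = ∑ f ∈ t, m (f • V) := by simp [measure_smul]
    _ = ∫⁻ g, ∑ f ∈ t, (f • V).indicator 1 g ∂m := by
      rw [lintegral_finsetSum _ fun f _ => measurable_one.indicator (hV.const_smul f)]
      simp [lintegral_indicator_one (hV.const_smul _)]
    _ ≤ ∫⁻ g, T.indicator (fun _ => (ℓ : ℝ≥0∞)) g ∂m := lintegral_mono pointwise
    _ = ℓ * m T := lintegral_indicator_const hT _

lemma encard_smul_inter_smul_le {G : Type*} [Group G] {Λ U : Set G} {ℓ : ℕ}
    (hΛ : ∀ x : G, (Λ ∩ x • U).encard ≤ ℓ) (x g : G) : (x • Λ ∩ g • U).encard ≤ ℓ := by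
  rw [← mul_inv_cancel_left x g, ← smul_smul, ← Set.smul_set_inter, Set.encard_smul_set]
  exact hΛ _

lemma exists_injOn_mem_of_mem_closure [T2Space G] {S : Set (CF G)} {P : CF G}
    (hP : P ∈ closure S) {s : Finset G} (hs : ↑s ⊆ P.1) {N : G → Set G}
    (hN : ∀ f ∈ s, N f ∈ 𝓝 f) :
    ∃ Q ∈ S, ∃ φ : G → G, Set.InjOn φ s ∧ ∀ f ∈ s, φ f ∈ Q.1 ∩ N f := by
  obtain ⟨O, hO, hdisj⟩ := s.finite_toSet.t2_separation
  set V : G → Set G := fun f => interior (N f) ∩ O f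
  have hFell : IsOpen (⋂ f ∈ s, {C : CF G | (C.1 ∩ V f).Nonempty}) :=
    isOpen_biInter_finset fun f _ => TopologicalSpace.isOpen_generateFrom_of_mem
      (Or.inr ⟨V f, isOpen_interior.inter (hO f).2, rfl⟩)
  have hPV : P ∈ ⋂ f ∈ s, {C : CF G | (C.1 ∩ V f).Nonempty} :=
    Set.mem_iInter₂.mpr fun f hf =>
      ⟨f, hs hf, mem_interior_iff_mem_nhds.mpr (hN f hf), (hO f).1⟩
  obtain ⟨Q, hQV, hQS⟩ := mem_closure_iff.mp hP _ hFell hPV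
  choose! φ hφ using Set.mem_iInter₂.mp hQV
  refine ⟨Q, hQS, φ, fun f hf f' hf' heq => ?_, fun f hf => ?_⟩
  · by_contra hne
    exact Set.disjoint_left.mp (hdisj hf hf' hne) (hφ f hf).2.2 (heq ▸ (hφ f' hf').2.2)
  · exact ⟨(hφ f hf).1, interior_subset (hφ f hf).2.1⟩

open Finset in
lemma card_mul_measure_le_of_mem_hullSet [T2Space G] [MeasurableSpace G] [BorelSpace G]
    (m : Measure G) [m.IsMulLeftInvariant] {U : Set G} (hUo : IsOpen U) (hUsymm : U⁻¹ = U)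
    {Λ : Set G} {ℓ : ℕ} (hΛ : ∀ x : G, (Λ ∩ x • U).encard ≤ ℓ) {P : CF G}
    (hP : P ∈ hullSet Λ) (K : Set G) {s : Finset G} (hs : ↑s ⊆ P.1 ∩ K) {C : Set G}
    (hC : IsCompact C) (hCU : C ⊆ U) :
    #s * m C ≤ ℓ * m (K * U) := by
  classical
  obtain ⟨W, hW, hWC⟩ := compact_open_separated_mul_left hC hUo hCU
  obtain ⟨Q, ⟨x, hQ⟩, φ, hφ_inj, hφ⟩ := exists_injOn_mem_of_mem_closure hP
    (hs.trans Set.inter_subset_left) (N := fun f => f • W) fun f _ => smul_mem_nhds_self.mpr hW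
  rw [hQ] at hφ
  have hφC_sub : ∀ f' ∈ s.image φ, f' • C ⊆ K * U := by
    simp only [Finset.mem_image]
    rintro _ ⟨f, hf, rfl⟩ _ ⟨c, hc, rfl⟩
    obtain ⟨w, hw, hfw⟩ := (hφ f hf).2
    refine ⟨f, (hs hf).2, w * c, hWC (Set.mul_mem_mul hw hc), ?_⟩
    simp only [smul_eq_mul] at hfw ⊢
    rw [← hfw, mul_assoc]
  have hcount (g : G) : #{f' ∈ s.image φ | g ∈ f' • C} ≤ ℓ := by
    suffices (↑{f' ∈ s.image φ | g ∈ f' • C} : Set G) ⊆ x • Λ ∩ g • U by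
      exact_mod_cast (Set.encard_coe_eq_coe_finsetCard _ ▸ Set.encard_mono this).trans
        (encard_smul_inter_smul_le hΛ x g)
    intro f' hf'
    obtain ⟨hf'φ, c, hc, hgc⟩ := Finset.mem_filter.mp hf'
    obtain ⟨f, hf, rfl⟩ := Finset.mem_image.mp hf'φ
    refine ⟨(hφ f hf).1, c⁻¹, hUsymm ▸ Set.inv_mem_inv.mpr (hCU hc), ?_⟩
    simp only [smul_eq_mul] at hgc ⊢
    rw [← hgc, mul_inv_cancel_right]
  simpa [Finset.card_image_of_injOn hφ_inj] using
    card_mul_measure_le_of_forall_card_le m hC.measurableSet hUo.mul_left.measurableSet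
      hφC_sub hcount

theorem statement3_general {G : Type*} [TopologicalSpace G] [Group G] [IsTopologicalGroup G]
    [T2Space G] [LocallyCompactSpace G] [SecondCountableTopology G]
    [MeasurableSpace G] [BorelSpace G]
    (m : Measure G) [m.IsHaarMeasure]
    (U : Set G) (hUo : IsOpen U) (hU1 : (1 : G) ∈ U) (hUsymm : U⁻¹ = U)
    (hUc : IsCompact (closure U))
    (Λ : Set G) (ℓ : ℕ) (hΛ : ∀ x : G, (Λ ∩ x • U).encard ≤ ℓ)
    (K : Set G) :
    ∀ P ∈ hullSet Λ, ((P.1 ∩ K).encard : ℝ≥0∞) ≤ ℓ * m (K * U) / m U := by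
  intro P hP
  have hU0 : m U ≠ 0 := hUo.measure_ne_zero m ⟨1, hU1⟩
  have hU_top : m U ≠ ⊤ := (measure_mono subset_closure |>.trans_lt hUc.measure_lt_top).ne
  refine encard_le_of_forall_finset_card_le fun s hs => ?_
  rw [ENNReal.le_div_iff_mul_le (Or.inl hU0) (Or.inl hU_top), hUo.measure_eq_iSup_isCompact m]
  simp only [ENNReal.mul_iSup, iSup_le_iff]
  exact fun C hCU hC =>
    card_mul_measure_le_of_mem_hullSet m hUo hUsymm hΛ hP K hs hC hCU

/-- Corollary: for an `ℓ`-relatively `U`-separated set `Λ` in a unimodular lcsc group `G`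
(`U` a symmetric open precompact identity neighborhood, `m` a Haar measure), every element
`P` of the hull of `Λ` satisfies `|P ∩ K| ≤ ℓ · m(KU)/m(U)` for every compact `K ⊆ G`. -/
theorem statement3 {G : Type*} [TopologicalSpace G] [Group G] [IsTopologicalGroup G]
    [T2Space G] [LocallyCompactSpace G] [SecondCountableTopology G]
    [MeasurableSpace G] [BorelSpace G]
    (m : Measure G) [m.IsHaarMeasure] [m.IsMulRightInvariant]
    (U : Set G) (hUo : IsOpen U) (hU1 : (1 : G) ∈ U) (hUsymm : U⁻¹ = U)
    (hUc : IsCompact (closure U))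
    (Λ : Set G) (ℓ : ℕ) (hΛ : ∀ x : G, (Λ ∩ x • U).encard ≤ ℓ)
    (K : Set G) (hK : IsCompact K) :
    ∀ P ∈ hullSet Λ, ((P.1 ∩ K).encard : ℝ≥0∞) ≤ ℓ * m (K * U) / m U :=
  statement3_general m U hUo hU1 hUsymm hUc Λ ℓ hΛ K
end

section
/- If Γ is a lattice in a unimodular locally compact second-countable group G, then the punctured hull of Γ equals the set {xΓ : x ∈ G} of left translates of Γ, and the punctured hull is homeomorphic as a G-space to the quotient G/Γ. -/
open Pointwise Set MeasureTheory Filter Topology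
open scoped ENNReal

set_option linter.unusedSectionVars false
set_option linter.unusedVariables false

variable {G : Type*} [TopologicalSpace G] [Group G] [IsTopologicalGroup G]

/-!
The coset `xΓ` is the fibre of `G → G ⧸ Γ` over `xΓ`, and it meets a set `V` exactly when `xΓ`
lies in the image of `V` in `G ⧸ Γ`. For open `V` this makes `q ↦ fibre over q` continuous from
`G ⧸ Γ` into the Chabauty–Fell space; conversely, if a closed set `C` is approximated by cosets and
`c ∈ C`, the approximating cosets eventually meet every neighbourhood of `c`, so they converge to
`cΓ` in `G ⧸ Γ`. Hence the map is an embedding, and since the Chabauty–Fell topology is Hausdorff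
on a locally compact group, every nonempty limit of cosets is itself a coset.
-/

namespace CF

lemma isOpen_setOf_inter_eq_empty {K : Set G} (hK : IsCompact K) :
    IsOpen {C : CF G | C.1 ∩ K = ∅} :=
  TopologicalSpace.isOpen_generateFrom_of_mem (Or.inl ⟨K, hK, rfl⟩)

lemma isOpen_setOf_inter_nonempty_s4 {V : Set G} (hV : IsOpen V) :
    IsOpen {C : CF G | (C.1 ∩ V).Nonempty} :=
  TopologicalSpace.isOpen_generateFrom_of_mem (Or.inr ⟨V, hV, rfl⟩)

variable [LocallyCompactSpace G]

lemma exists_isOpen_separating_of_mem_of_notMem {C D : CF G} {p : G} (hpC : p ∈ C.1)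
    (hpD : p ∉ D.1) :
    ∃ u v : Set (CF G), IsOpen u ∧ IsOpen v ∧ C ∈ u ∧ D ∈ v ∧ Disjoint u v := by
  obtain ⟨K, hK, hpK, hKD⟩ := exists_compact_subset D.2.isOpen_compl hpD
  refine ⟨_, _, isOpen_setOf_inter_nonempty_s4 isOpen_interior, isOpen_setOf_inter_eq_empty hK,
    ⟨p, hpC, hpK⟩, ?_, ?_⟩
  · exact Set.disjoint_iff_inter_eq_empty.mp (Set.subset_compl_iff_disjoint_left.mp hKD)
  · refine Set.disjoint_left.mpr fun E ⟨q, hqE, hqK⟩ hEK => ?_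
    exact (Set.eq_empty_iff_forall_notMem.mp hEK) q ⟨hqE, interior_subset hqK⟩

instance : T2Space (CF G) := by
  refine t2Space_iff _ |>.mpr fun C D hCD => ?_
  obtain ⟨p, hp⟩ : ∃ p, ¬(p ∈ C.1 ↔ p ∈ D.1) :=
    not_forall.mp fun h => hCD (Subtype.ext (Set.ext h))
  by_cases hpC : p ∈ C.1
  · exact exists_isOpen_separating_of_mem_of_notMem hpC (by tauto)
  · obtain ⟨u, v, hu, hv, hDu, hCv, huv⟩ :=
      exists_isOpen_separating_of_mem_of_notMem (C := D) (by tauto) hpC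
    exact ⟨v, u, hv, hu, hCv, hDu, huv.symm⟩

end CF

lemma QuotientGroup.preimage_mk_singleton_mk (Γ : Subgroup G) (x : G) :
    QuotientGroup.mk ⁻¹' {(x : G ⧸ Γ)} = x • (Γ : Set G) := by
  rw [← Set.image_singleton, QuotientGroup.preimage_image_mk_eq_mul, Set.singleton_mul]
  rfl

section Coset

variable (Γ : Subgroup G) [IsClosed (Γ : Set G)]

def cosetCF (q : G ⧸ Γ) : CF G :=
  ⟨QuotientGroup.mk ⁻¹' {q}, by
    induction q using QuotientGroup.induction_on with
    | H x => rw [QuotientGroup.preimage_mk_singleton_mk]; exact IsClosed.smul ‹_› x⟩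

lemma cosetCF_mk (x : G) : (cosetCF Γ x).1 = x • (Γ : Set G) :=
  QuotientGroup.preimage_mk_singleton_mk Γ x

variable {Γ} in
lemma cosetCF_inter_nonempty_iff {q : G ⧸ Γ} {s : Set G} :
    ((cosetCF Γ q).1 ∩ s).Nonempty ↔ q ∈ QuotientGroup.mk '' s := by
  simp only [cosetCF, Set.Nonempty, Set.mem_inter_iff, Set.mem_preimage, Set.mem_singleton_iff,
    Set.mem_image]
  exact exists_congr fun x => and_comm

lemma range_cosetCF : Set.range (cosetCF Γ) = {C : CF G | ∃ x : G, C.1 = x • (Γ : Set G)} := by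
  ext C
  constructor
  · rintro ⟨q, rfl⟩
    induction q using QuotientGroup.induction_on with
    | H x => exact ⟨x, cosetCF_mk Γ x⟩
  · rintro ⟨x, hx⟩
    exact ⟨x, Subtype.ext ((cosetCF_mk Γ x).trans hx.symm)⟩

lemma continuous_cosetCF : Continuous (cosetCF Γ) := by
  refine continuous_generateFrom_iff.mpr ?_
  rintro U (⟨K, hK, rfl⟩ | ⟨V, hV, rfl⟩)
  · have h : cosetCF Γ ⁻¹' {C | C.1 ∩ K = ∅} = (QuotientGroup.mk '' K)ᶜ := by
      ext q
      rw [Set.mem_preimage, Set.mem_ofPred_eq, Set.mem_compl_iff, ← cosetCF_inter_nonempty_iff,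
        Set.not_nonempty_iff_eq_empty]
    rw [h, isOpen_compl_iff, ← (QuotientGroup.isQuotientMap_mk Γ).isClosed_preimage,
      QuotientGroup.preimage_image_mk_eq_mul]
    exact IsClosed.mul_left_of_isCompact ‹_› hK
  · have h : cosetCF Γ ⁻¹' {C | (C.1 ∩ V).Nonempty} = QuotientGroup.mk '' V :=
      Set.ext fun q => cosetCF_inter_nonempty_iff
    rw [h]
    exact QuotientGroup.isOpenMap_coe V hV

lemma comap_cosetCF_nhds_le {C : CF G} {c : G} (hc : c ∈ C.1) :
    comap (cosetCF Γ) (𝓝 C) ≤ 𝓝 (c : G ⧸ Γ) := by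
  intro s hs
  rw [QuotientGroup.nhds_eq, mem_map] at hs
  obtain ⟨V, hVs, hV, hcV⟩ := mem_nhds_iff.mp hs
  refine mem_comap.mpr ⟨_, (CF.isOpen_setOf_inter_nonempty_s4 hV).mem_nhds ⟨c, hc, hcV⟩, ?_⟩
  rintro q hq
  obtain ⟨v, hv, rfl⟩ := cosetCF_inter_nonempty_iff.mp hq
  exact hVs hv

lemma isEmbedding_cosetCF : IsEmbedding (cosetCF Γ) := by
  refine ⟨isInducing_iff_nhds.mpr fun q => ?_, fun q q' h => ?_⟩
  · induction q using QuotientGroup.induction_on with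
    | H c =>
      refine le_antisymm (continuous_cosetCF Γ).continuousAt.le_comap
        (comap_cosetCF_nhds_le Γ ?_)
      rw [cosetCF_mk]
      exact Set.mem_smul_set.mpr ⟨1, Γ.one_mem, mul_one c⟩
  · exact Set.singleton_injective
      (QuotientGroup.mk_surjective.preimage_injective (congrArg Subtype.val h))

variable [LocallyCompactSpace G]

lemma eq_cosetCF_of_mem_closure {C : CF G} (hC : C ∈ closure (Set.range (cosetCF Γ))) {c : G}
    (hc : c ∈ C.1) : C = cosetCF Γ c := by
  have hne : (comap (cosetCF Γ) (𝓝 C)).NeBot := by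
    refine comap_neBot_iff.mpr fun t ht => ?_
    obtain ⟨_, hy, q, rfl⟩ := mem_closure_iff_nhds.mp hC t ht
    exact ⟨q, hy⟩
  exact tendsto_nhds_unique tendsto_comap
    ((continuous_cosetCF Γ).continuousAt.tendsto.mono_left (comap_cosetCF_nhds_le Γ hc))

lemma phull_eq_range_cosetCF : phull (Γ : Set G) = Set.range (cosetCF Γ) := by
  have hhull : hullSet (Γ : Set G) = closure (Set.range (cosetCF Γ)) := by
    rw [range_cosetCF]
    rfl
  ext C
  constructor
  · rintro ⟨hC, c, hc⟩
    exact ⟨c, (eq_cosetCF_of_mem_closure Γ (hhull ▸ hC) hc).symm⟩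
  · rintro ⟨q, rfl⟩
    refine ⟨hhull ▸ subset_closure ⟨q, rfl⟩, ?_⟩
    obtain ⟨x, rfl⟩ := QuotientGroup.mk_surjective q
    exact ⟨x, rfl⟩

end Coset

theorem statement4_general {G : Type*} [TopologicalSpace G] [Group G] [IsTopologicalGroup G]
    [T2Space G] [LocallyCompactSpace G]
    (Γ : Subgroup G) [DiscreteTopology Γ] :
    phull (Γ : Set G) = {C : CF G | ∃ x : G, C.1 = x • (Γ : Set G)} ∧
    ∃ φ : (G ⧸ Γ) ≃ₜ ↥(phull (Γ : Set G)),
      ∀ x : G, ((φ (x : G ⧸ Γ)) : CF G).1 = x • (Γ : Set G) :=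
  ⟨(phull_eq_range_cosetCF Γ).trans (range_cosetCF Γ),
    (isEmbedding_cosetCF Γ).toHomeomorph.trans (.setCongr (phull_eq_range_cosetCF Γ).symm),
    cosetCF_mk Γ⟩

/-- If `Γ` is a lattice in a unimodular lcsc group `G` (a discrete subgroup of finite
covolume), then the punctured hull of `Γ` equals the set of left translates of `Γ`, and the
punctured hull is `G`-equivariantly homeomorphic to `G ⧸ Γ` (equivariance being encoded by
the requirement that the coset `xΓ` is sent to the translate `x • Γ`). -/
theorem statement4 {G : Type*} [TopologicalSpace G] [Group G] [IsTopologicalGroup G]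
    [T2Space G] [LocallyCompactSpace G] [SecondCountableTopology G]
    [MeasurableSpace G] [BorelSpace G]
    (m : Measure G) [m.IsHaarMeasure] [m.IsMulRightInvariant]
    (Γ : Subgroup G) [DiscreteTopology Γ]
    (hcovol : ∃ 𝓕 : Set G, MeasurableSet 𝓕 ∧ IsFundamentalDomain Γ.op 𝓕 m ∧ m 𝓕 < ⊤) :
    phull (Γ : Set G) = {C : CF G | ∃ x : G, C.1 = x • (Γ : Set G)} ∧
    ∃ φ : (G ⧸ Γ) ≃ₜ ↥(phull (Γ : Set G)),
      ∀ x : G, ((φ (x : G ⧸ Γ)) : CF G).1 = x • (Γ : Set G) :=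
  statement4_general Γ
end

section
/- Let H be a reproducing kernel Hilbert space of functions on a unimodular lcsc group G, isometrically embedded in L²(G), invariant under σ-twisted left translations, and contained in the Wiener amalgam space W²(G). Then for a subset Λ ⊆ G, the family of kernel functions (k_λ)_{λ∈Λ} is a Bessel sequence in H if and only if Λ is relatively separated. -/
open Pointwise Set MeasureTheory Filter Topology
open scoped ENNReal

set_option linter.unusedSectionVars false
set_option linter.unusedVariables false

variable {G : Type*} [TopologicalSpace G] [Group G] [IsTopologicalGroup G]

open scoped ComplexInnerProductSpace NNReal

/-! If `Λ` is relatively separated, then for a small identity neighbourhood `V ⊆ Q` every point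
of `G` lies in boundedly many of the sets `λV⁻¹`, so `∑_{λ ∈ Λ} |f(λ)|²` is dominated by the
`L²`-norm of the local maximal function `x ↦ sup_{xQ} |f|`, finite since `f ∈ W²(G)`. This makes
the analysis map `f ↦ (⟪k_λ, f⟫)_λ` into `ℓ²(Λ)` well defined, and the closed graph theorem makes it
bounded.

Conversely, twisted translations are isometric on `H`, so a Bessel bound `B` gives
`∑_{λ ∈ Λ} |f(x⁻¹λ)|² ≤ B‖f‖²` for every `x`. Pick `f ≠ 0` and a compact `C` on which
`w ↦ |f(w⁻¹)|²` has positive integral `c` (this is where unimodularity enters). Integrating the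
previous bound over `x ∈ x₀UC` shows that every `λ ∈ Λ ∩ x₀U` contributes `c`, whence
`|Λ ∩ x₀U| ≤ B‖f‖² m(UC) / c` uniformly in `x₀`. -/

section Bessel

variable {𝕜 ι : Type*} [RCLike 𝕜]

def IsBessel (𝕜 : Type*) [RCLike 𝕜] {H : Type*} [NormedAddCommGroup H] [InnerProductSpace 𝕜 H]
    (e : ι → H) : Prop :=
  ∃ B : ℝ≥0∞, B ≠ ⊤ ∧ ∀ f : H, ∑' i, (‖inner 𝕜 f (e i)‖₊ : ℝ≥0∞) ^ 2 ≤ B * (‖f‖₊ : ℝ≥0∞) ^ 2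

theorem memℓp_two_of_tsum_coe_nnnorm_sq_ne_top {E : ι → Type*} [∀ i, NormedAddCommGroup (E i)]
    {f : ∀ i, E i} (hf : ∑' i, (‖f i‖₊ : ℝ≥0∞) ^ 2 ≠ ⊤) : Memℓp f 2 := by
  refine memℓp_gen ?_
  have hsum : Summable fun i => ‖f i‖₊ ^ 2 :=
    ENNReal.tsum_coe_ne_top_iff_summable.1 (by simpa using hf)
  simpa [← NNReal.summable_coe] using hsum

theorem lp.tsum_coe_nnnorm_sq {E : ι → Type*} [∀ i, NormedAddCommGroup (E i)] (u : lp E 2) :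
    ∑' i, (‖u i‖₊ : ℝ≥0∞) ^ 2 = (‖u‖₊ : ℝ≥0∞) ^ 2 := by
  have hp : 0 < (2 : ℝ≥0∞).toReal := by norm_num
  have hsum : Summable fun i => ‖u i‖₊ ^ 2 := by
    simpa [← NNReal.summable_coe] using (lp.memℓp u).summable hp
  have hnorm : ‖u‖₊ ^ 2 = ∑' i, ‖u i‖₊ ^ 2 :=
    NNReal.eq (by simpa [NNReal.coe_tsum] using lp.norm_rpow_eq_tsum hp u)
  simp only [← ENNReal.coe_pow, hnorm, ENNReal.coe_tsum hsum]

theorem lp.continuous_of_continuous_apply {E : Type*} [NormedAddCommGroup E] [NormedSpace 𝕜 E]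
    [CompleteSpace E] {F : ι → Type*} [∀ i, NormedAddCommGroup (F i)] [∀ i, NormedSpace 𝕜 (F i)]
    [∀ i, CompleteSpace (F i)] {p : ℝ≥0∞} [Fact (1 ≤ p)] (T : E →ₗ[𝕜] lp F p)
    (hT : ∀ i, Continuous fun x => T x i) : Continuous T := by
  refine T.continuous_of_seq_closed_graph fun u x y hux huy => lp.ext (funext fun i => ?_)
  exact tendsto_nhds_unique (((lp.evalCLM 𝕜 _ p i).continuous.tendsto y).comp huy)
    (((hT i).tendsto x).comp hux)

theorem isBessel_of_tsum_ne_top {H : Type*} [NormedAddCommGroup H] [InnerProductSpace 𝕜 H]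
    [CompleteSpace H] (e : ι → H)
    (he : ∀ f : H, ∑' i, (‖inner 𝕜 f (e i)‖₊ : ℝ≥0∞) ^ 2 ≠ ⊤) : IsBessel 𝕜 e := by
  have hsymm : ∀ f i, ‖inner 𝕜 (e i) f‖₊ = ‖inner 𝕜 f (e i)‖₊ := fun f i =>
    NNReal.eq (norm_inner_symm _ _)
  let T : H →ₗ[𝕜] lp (fun _ : ι => 𝕜) 2 :=
    { toFun f := ⟨fun i => inner 𝕜 (e i) f,
        memℓp_two_of_tsum_coe_nnnorm_sq_ne_top (by simpa only [hsymm] using he f)⟩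
      map_add' f g := lp.ext <| funext fun i => inner_add_right _ _ _
      map_smul' c f := lp.ext <| funext fun i => inner_smul_right _ _ _ }
  let Tc : H →L[𝕜] lp (fun _ : ι => 𝕜) 2 :=
    ⟨T, lp.continuous_of_continuous_apply T fun i => continuous_const.inner continuous_id⟩
  refine ⟨(‖Tc‖₊ : ℝ≥0∞) ^ 2, by simp, fun f => ?_⟩
  calc ∑' i, (‖inner 𝕜 f (e i)‖₊ : ℝ≥0∞) ^ 2 = (‖Tc f‖₊ : ℝ≥0∞) ^ 2 := by
        simp only [← hsymm]; exact lp.tsum_coe_nnnorm_sq (Tc f)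
    _ ≤ ((‖Tc‖₊ * ‖f‖₊ : ℝ≥0) : ℝ≥0∞) ^ 2 := by gcongr; exact Tc.le_opNNNorm f
    _ = (‖Tc‖₊ : ℝ≥0∞) ^ 2 * (‖f‖₊ : ℝ≥0∞) ^ 2 := by push_cast; ring

end Bessel

theorem Set.encard_le_of_forall_finset_card_le {α : Type*} {s : Set α} {n : ℕ}
    (h : ∀ t : Finset α, ↑t ⊆ s → t.card ≤ n) : s.encard ≤ n := by
  by_contra! hlt
  obtain ⟨t, hts, htcard⟩ := Set.exists_subset_encard_eq (Order.add_one_le_of_lt hlt)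
  have htfin : t.Finite := Set.finite_of_encard_eq_coe (k := n + 1) (by simpa using htcard)
  have hcard : (htfin.toFinset.card : ℕ∞) = n + 1 := by
    rw [← Set.encard_coe_eq_coe_finsetCard, htfin.coe_toFinset, htcard]
  have hle := h htfin.toFinset (by simpa using hts)
  norm_cast at hcard
  omega

theorem Set.encard_le_floor_of_forall_finset_card_mul_le {α : Type*} {s : Set α}
    {c M : ℝ≥0∞} (hc : c ≠ 0) (hM : M ≠ ⊤) (h : ∀ t : Finset α, ↑t ⊆ s → t.card * c ≤ M) :
    s.encard ≤ ⌊(M / c).toNNReal⌋₊ := by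
  refine Set.encard_le_of_forall_finset_card_le fun t hts => Nat.le_floor ?_
  have hle : (t.card : ℝ≥0∞) ≤ M / c :=
    (ENNReal.le_div_iff_mul_le (Or.inl hc) (Or.inr hM)).2 (h t hts)
  simpa using ENNReal.toNNReal_mono (ENNReal.div_ne_top hM hc) hle

theorem ENNReal.sum_le_tsum_subtype {α : Type*} {s : Set α} {T : Finset α} (hT : ↑T ⊆ s)
    (f : α → ℝ≥0∞) : ∑ x ∈ T, f x ≤ ∑' x : s, f x := by
  rw [tsum_subtype]
  calc ∑ x ∈ T, f x = ∑ x ∈ T, s.indicator f x :=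
        Finset.sum_congr rfl fun x hx => (Set.indicator_of_mem (hT hx) f).symm
    _ ≤ ∑' x, s.indicator f x := ENNReal.sum_le_tsum T

theorem sum_lintegral_le_lintegral_sum {α ι : Type*} [MeasurableSpace α] (μ : Measure α)
    (T : Finset ι) (f : ι → α → ℝ≥0∞) :
    ∑ i ∈ T, ∫⁻ x, f i x ∂μ ≤ ∫⁻ x, ∑ i ∈ T, f i x ∂μ := by
  classical
  induction T using Finset.induction_on with
  | empty => simp
  | insert i T hi ih =>
    simp only [Finset.sum_insert hi]
    exact (add_le_add le_rfl ih).trans (le_lintegral_add _ _)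

theorem exists_isCompact_setLIntegral_pos {X : Type*} [TopologicalSpace X] [SigmaCompactSpace X]
    [MeasurableSpace X] (μ : Measure X) {f : X → ℝ≥0∞} (hf : 0 < ∫⁻ x, f x ∂μ) :
    ∃ K, IsCompact K ∧ 0 < ∫⁻ x in K, f x ∂μ := by
  by_contra! h
  refine hf.ne' (le_antisymm ?_ bot_le)
  calc ∫⁻ x, f x ∂μ = ∫⁻ x in ⋃ n, compactCovering X n, f x ∂μ := by
        rw [iUnion_compactCovering, setLIntegral_univ]
    _ ≤ ∑' n, ∫⁻ x in compactCovering X n, f x ∂μ := lintegral_iUnion_le _ _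
    _ = 0 := by
        simp [fun n => nonpos_iff_eq_zero.1 (h _ (isCompact_compactCovering X n))]

section Group

variable {G : Type*} [Group G]

theorem mem_smul_set_inv_iff {x y : G} {V : Set G} : x ∈ y • V⁻¹ ↔ y ∈ x • V := by
  simp [Set.mem_smul_set_iff_inv_smul_mem]

theorem sum_indicator_smul_inv_le {Λ V Q : Set G} {ℓ : ℕ} {T : Finset G} (hT : ↑T ⊆ Λ)
    (hVQ : V ⊆ Q) (φ : G → ℝ≥0∞) {x : G} (hℓ : (Λ ∩ x • V).encard ≤ ℓ) :
    ∑ y ∈ T, (y • V⁻¹).indicator (fun _ => φ y) x ≤ ℓ * ⨆ t ∈ x • Q, φ t := by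
  classical
  simp only [Set.indicator_apply, mem_smul_set_inv_iff, ← Finset.sum_filter]
  have hcard : (T.filter (· ∈ x • V)).card ≤ ℓ := by
    have hsub : (↑(T.filter (· ∈ x • V)) : Set G) ⊆ Λ ∩ x • V := fun y hy => by
      simp only [Finset.coe_filter, Set.mem_ofPred_eq] at hy
      exact ⟨hT hy.1, hy.2⟩
    have := (Set.encard_le_encard hsub).trans hℓ
    rwa [Set.encard_coe_eq_coe_finsetCard, Nat.cast_le] at this
  calc ∑ y ∈ T.filter (· ∈ x • V), φ y ≤ (T.filter (· ∈ x • V)).card • ⨆ t ∈ x • Q, φ t :=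
        Finset.sum_le_card_nsmul _ _ _ fun y hy =>
          le_iSup₂ (f := fun t _ => φ t) y (Set.smul_set_mono hVQ (Finset.mem_filter.1 hy).2)
    _ ≤ ℓ * ⨆ t ∈ x • Q, φ t := by rw [nsmul_eq_mul]; gcongr

theorem setLIntegral_smul_set_inv_mul [MeasurableSpace G] [MeasurableMul G] (m : Measure G)
    [m.IsMulLeftInvariant] (h : G → ℝ≥0∞) (C : Set G) (y : G) :
    ∫⁻ x in y • C, h (x⁻¹ * y) ∂m = ∫⁻ w in C, h w⁻¹ ∂m := by
  have := (measurePreserving_mul_left m y).setLIntegral_comp_emb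
    (measurableEmbedding_mulLeft y) (fun x => h (x⁻¹ * y)) C
  rw [show (y * ·) '' C = y • C from rfl] at this
  simpa [mul_assoc] using this.symm

variable {H : Type*} [NormedAddCommGroup H] [InnerProductSpace ℂ H] {ev : G → H}
  {σ : G → G → ℂ}

theorem nnnorm_inner_of_twisted_translate (hσ : ∀ x y : G, ‖σ x y‖ = 1) {x : G} {f g : H}
    (hg : ∀ y : G, ⟪g, ev y⟫ = σ x (x⁻¹ * y) * ⟪f, ev (x⁻¹ * y)⟫) (y : G) :
    ‖⟪g, ev y⟫‖₊ = ‖⟪f, ev (x⁻¹ * y)⟫‖₊ := by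
  rw [hg, nnnorm_mul, show ‖σ x (x⁻¹ * y)‖₊ = 1 from NNReal.eq (hσ _ _), one_mul]

theorem nnnorm_eq_of_twisted_translate [MeasurableSpace G] [MeasurableMul G] (m : Measure G)
    [m.IsMulLeftInvariant] (hσ : ∀ x y : G, ‖σ x y‖ = 1)
    (hiso : ∀ f : H, ∫⁻ x : G, ((‖⟪f, ev x⟫‖₊ : ℝ≥0∞)) ^ 2 ∂m = (‖f‖₊ : ℝ≥0∞) ^ 2) {x : G}
    {f g : H} (hg : ∀ y : G, ⟪g, ev y⟫ = σ x (x⁻¹ * y) * ⟪f, ev (x⁻¹ * y)⟫) :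
    ‖g‖₊ = ‖f‖₊ := by
  have hsq : (‖g‖₊ : ℝ≥0∞) ^ 2 = (‖f‖₊ : ℝ≥0∞) ^ 2 := by
    rw [← hiso g, ← hiso f,
      ← lintegral_mul_left_eq_self (fun y => (‖⟪f, ev y⟫‖₊ : ℝ≥0∞) ^ 2) x⁻¹]
    simp only [nnnorm_inner_of_twisted_translate hσ hg]
  exact ENNReal.coe_inj.1 ((ENNReal.pow_right_strictMono two_ne_zero).injective hsq)

end Group

theorem isInvInvariant_of_isMulRightInvariant [LocallyCompactSpace G] [SecondCountableTopology G]
    [MeasurableSpace G] [BorelSpace G] (m : Measure G) [m.IsHaarMeasure]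
    [m.IsMulRightInvariant] : m.IsInvInvariant := by
  constructor
  set c : ℝ≥0∞ := (Measure.haarScalarFactor m.inv m : ℝ≥0∞)
  have hc : m.inv = c • m := Measure.isMulLeftInvariant_eq_smul m.inv m
  have hsq : m = c ^ 2 • m := by
    conv_lhs => rw [← Measure.inv_inv m, Measure.inv, ← Measure.inv_def, hc]
    rw [Measure.inv, Measure.map_smul, ← Measure.inv_def, hc, smul_smul, sq]
  obtain ⟨K⟩ : Nonempty (TopologicalSpace.PositiveCompacts G) := inferInstance
  have hK : c ^ 2 * m K = 1 ^ 2 * m K := by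
    conv_rhs => rw [hsq]
    simp
  have hc1 : c = 1 := (ENNReal.pow_right_strictMono two_ne_zero).injective <|
    (ENNReal.mul_left_inj (m.measure_pos_of_nonempty_interior K.interior_nonempty).ne'
      K.isCompact.measure_lt_top.ne).1 hK
  rw [hc, hc1, one_smul]

theorem RelSep.exists_isOpen_subset {Λ Q : Set G} (hΛ : RelSep Λ) (hQ : Q ∈ 𝓝 (1 : G)) :
    ∃ V : Set G, IsOpen V ∧ (1 : G) ∈ V ∧ V ⊆ Q ∧ ∃ ℓ : ℕ, ∀ x : G, (Λ ∩ x • V).encard ≤ ℓ := by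
  obtain ⟨U, hU, ⟨u, hu⟩, ℓ, hℓ⟩ := hΛ
  refine ⟨u⁻¹ • U ∩ interior Q, (hU.smul _).inter isOpen_interior,
    ⟨⟨u, hu, inv_mul_cancel u⟩, mem_interior_iff_mem_nhds.2 hQ⟩,
    fun _ h => interior_subset h.2, ℓ, fun x => ?_⟩
  refine (Set.encard_le_encard (Set.inter_subset_inter_right _ ?_)).trans (hℓ (x * u⁻¹))
  rw [mul_smul]
  exact Set.smul_set_mono Set.inter_subset_left

theorem RelSep.exists_tsum_le_lintegral_iSup [MeasurableSpace G] [BorelSpace G] (m : Measure G)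
    [m.IsHaarMeasure] {Λ Q : Set G} (hΛ : RelSep Λ) (hQc : IsCompact Q) (hQ : Q ∈ 𝓝 (1 : G)) :
    ∃ C : ℝ≥0∞, C ≠ ⊤ ∧
      ∀ φ : G → ℝ≥0∞, ∑' y : Λ, φ y ≤ C * ∫⁻ x, ⨆ t ∈ x • Q, φ t ∂m := by
  obtain ⟨V, hVo, hV1, hVQ, ℓ, hℓ⟩ := hΛ.exists_isOpen_subset hQ
  have hmeas : ∀ y : G, MeasurableSet (y • V⁻¹) := fun y => (hVo.inv.smul y).measurableSet
  have hpos : m V⁻¹ ≠ 0 := (hVo.inv.measure_pos m ⟨1, by simpa using hV1⟩).ne'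
  have hfin : m V⁻¹ ≠ ⊤ :=
    ((measure_mono (Set.inv_subset_inv.2 hVQ)).trans_lt hQc.inv.measure_lt_top).ne
  refine ⟨ℓ / m V⁻¹, ENNReal.div_ne_top (by simp) hpos, fun φ => ?_⟩
  rw [ENNReal.tsum_eq_iSup_sum, ← ENNReal.mul_div_right_comm]
  refine iSup_le fun s => ?_
  rw [ENNReal.le_div_iff_mul_le (Or.inl hpos) (Or.inl hfin)]
  set T := s.map (Function.Embedding.subtype (· ∈ Λ))
  calc (∑ y ∈ s, φ y) * m V⁻¹ = ∑ y ∈ T, ∫⁻ x, (y • V⁻¹).indicator (fun _ => φ y) x ∂m := by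
        simp only [T, Finset.sum_map, Finset.sum_mul, lintegral_indicator_const (hmeas _),
          measure_smul]
        rfl
    _ = ∫⁻ x, ∑ y ∈ T, (y • V⁻¹).indicator (fun _ => φ y) x ∂m :=
        (lintegral_finsetSum _ fun y _ => measurable_const.indicator (hmeas y)).symm
    _ ≤ ∫⁻ x, ℓ * ⨆ t ∈ x • Q, φ t ∂m :=
        lintegral_mono fun x => sum_indicator_smul_inv_le (by simp [T]) hVQ φ (hℓ x)
    _ = ℓ * ∫⁻ x, ⨆ t ∈ x • Q, φ t ∂m := lintegral_const_mul' _ _ (by simp)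

theorem RelSep.tsum_sq_ne_top [MeasurableSpace G] [BorelSpace G] (m : Measure G)
    [m.IsHaarMeasure] {Λ Q : Set G} (hΛ : RelSep Λ) (hQc : IsCompact Q) (hQ : Q ∈ 𝓝 (1 : G))
    {φ : G → ℝ≥0∞} (hφ : ∫⁻ x, (⨆ t ∈ x • Q, φ t) ^ 2 ∂m < ⊤) :
    ∑' y : Λ, φ y ^ 2 ≠ ⊤ := by
  obtain ⟨C, hC, hCφ⟩ := hΛ.exists_tsum_le_lintegral_iSup m hQc hQ
  refine ne_top_of_le_ne_top (ENNReal.mul_ne_top hC hφ.ne) ((hCφ fun t => φ t ^ 2).trans ?_)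
  gcongr with x
  exact iSup₂_le fun t ht => pow_le_pow_left' (le_iSup₂ (f := fun t _ => φ t) t ht) 2

theorem relSep_of_forall_tsum_le [MeasurableSpace G] [BorelSpace G] [LocallyCompactSpace G]
    [SigmaCompactSpace G] (m : Measure G) [m.IsHaarMeasure] [m.IsInvInvariant] {Λ : Set G}
    (h : G → ℝ≥0∞) (hpos : 0 < ∫⁻ y, h y ∂m) {M : ℝ≥0∞} (hM : M ≠ ⊤)
    (hΛ : ∀ x, ∑' y : Λ, h (x⁻¹ * y) ≤ M) : RelSep Λ := by
  rw [← lintegral_inv_eq_self] at hpos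
  obtain ⟨C, hC, hCpos⟩ := exists_isCompact_setLIntegral_pos m hpos
  obtain ⟨K, hK, hK1⟩ := exists_compact_mem_nhds (1 : G)
  refine ⟨interior K, isOpen_interior, ⟨1, mem_interior_iff_mem_nhds.2 hK1⟩, _, fun x₀ =>
    Set.encard_le_floor_of_forall_finset_card_mul_le hCpos.ne'
      (ENNReal.mul_ne_top hM ((hK.mul hC).measure_lt_top (μ := m)).ne) fun T hT => ?_⟩
  calc T.card * ∫⁻ w in C, h w⁻¹ ∂m = ∑ y ∈ T, ∫⁻ x in y • C, h (x⁻¹ * y) ∂m := by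
        simp [setLIntegral_smul_set_inv_mul]
    _ ≤ ∑ y ∈ T, ∫⁻ x in x₀ • (K * C), h (x⁻¹ * y) ∂m := by
        refine Finset.sum_le_sum fun y hy => lintegral_mono_set ?_
        obtain ⟨k, hk, rfl⟩ := (hT hy).2
        change (x₀ * k) • C ⊆ x₀ • (K * C)
        rw [← smul_smul]
        exact Set.smul_set_mono (Set.smul_set_subset_mul (interior_subset hk))
    _ ≤ ∫⁻ x in x₀ • (K * C), ∑ y ∈ T, h (x⁻¹ * y) ∂m := sum_lintegral_le_lintegral_sum _ _ _
    _ ≤ ∫⁻ _ in x₀ • (K * C), M ∂m := lintegral_mono fun x =>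
        (ENNReal.sum_le_tsum_subtype (hT.trans Set.inter_subset_left) _).trans (hΛ x)
    _ = M * m (K * C) := by rw [setLIntegral_const, measure_smul]

theorem relSep_of_isBessel [MeasurableSpace G] [BorelSpace G] [LocallyCompactSpace G]
    [SigmaCompactSpace G] {H : Type*} [NormedAddCommGroup H] [InnerProductSpace ℂ H]
    [Nontrivial H] (m : Measure G) [m.IsHaarMeasure] [m.IsInvInvariant] {ev : G → H}
    {σ : G → G → ℂ} (hσ : ∀ x y : G, ‖σ x y‖ = 1)
    (hiso : ∀ f : H, ∫⁻ x : G, ((‖⟪f, ev x⟫‖₊ : ℝ≥0∞)) ^ 2 ∂m = (‖f‖₊ : ℝ≥0∞) ^ 2)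
    (hinv : ∀ (x : G) (f : H), ∃ g : H, ∀ y : G,
      ⟪g, ev y⟫ = σ x (x⁻¹ * y) * ⟪f, ev (x⁻¹ * y)⟫)
    {Λ : Set G} (hΛ : IsBessel ℂ fun y : Λ => ev y) : RelSep Λ := by
  obtain ⟨B, hB, hBessel⟩ := hΛ
  obtain ⟨f, hf⟩ := exists_ne (0 : H)
  refine relSep_of_forall_tsum_le m (fun y => (‖⟪f, ev y⟫‖₊ : ℝ≥0∞) ^ 2) ?_
    (M := B * (‖f‖₊ : ℝ≥0∞) ^ 2) (ENNReal.mul_ne_top hB (by simp)) fun x => ?_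
  · rw [hiso f]
    exact ENNReal.pow_pos (ENNReal.coe_pos.2 (nnnorm_pos.2 hf)) 2
  · obtain ⟨g, hg⟩ := hinv x f
    calc ∑' y : Λ, (‖⟪f, ev (x⁻¹ * y)⟫‖₊ : ℝ≥0∞) ^ 2
        = ∑' y : Λ, (‖⟪g, ev y⟫‖₊ : ℝ≥0∞) ^ 2 := by
          simp only [nnnorm_inner_of_twisted_translate hσ hg]
      _ ≤ B * (‖g‖₊ : ℝ≥0∞) ^ 2 := hBessel g
      _ = B * (‖f‖₊ : ℝ≥0∞) ^ 2 := by rw [nnnorm_eq_of_twisted_translate m hσ hiso hg]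

theorem statement15_general {G : Type*} [TopologicalSpace G] [Group G] [IsTopologicalGroup G]
    [LocallyCompactSpace G] [SecondCountableTopology G]
    [MeasurableSpace G] [BorelSpace G]
    (m : Measure G) [m.IsHaarMeasure] [m.IsMulRightInvariant]
    {H : Type*} [NormedAddCommGroup H] [InnerProductSpace ℂ H] [CompleteSpace H]
    [Nontrivial H]
    (ev : G → H) (σ : G → G → ℂ)
    (hσnorm : ∀ x y : G, ‖σ x y‖ = 1)
    (hiso : ∀ f : H, ∫⁻ x : G, ((‖⟪f, ev x⟫‖₊ : ℝ≥0∞)) ^ 2 ∂m = (‖f‖₊ : ℝ≥0∞) ^ 2)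
    (hinv : ∀ (x : G) (f : H), ∃ g : H, ∀ y : G,
      ⟪g, ev y⟫ = σ x (x⁻¹ * y) * ⟪f, ev (x⁻¹ * y)⟫)
    (Q : Set G) (hQc : IsCompact Q) (hQ1 : Q ∈ nhds (1 : G))
    (hW : ∀ f : H,
      ∫⁻ x : G, (⨆ t ∈ x • Q, (‖⟪f, ev t⟫‖₊ : ℝ≥0∞)) ^ 2 ∂m < ⊤)
    (Λ : Set G) :
    (∃ B : ℝ≥0∞, B ≠ ⊤ ∧ ∀ f : H,
        ∑' lam : ↥Λ, ((‖⟪f, ev (↑lam : G)⟫‖₊ : ℝ≥0∞)) ^ 2 ≤ B * (‖f‖₊ : ℝ≥0∞) ^ 2) ↔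
      RelSep Λ := by
  have := isInvInvariant_of_isMulRightInvariant m
  change IsBessel ℂ (fun y : Λ => ev y) ↔ RelSep Λ
  exact ⟨relSep_of_isBessel m hσnorm hiso hinv, fun hΛ => isBessel_of_tsum_ne_top _ fun f =>
    hΛ.tsum_sq_ne_top m hQc hQ1 (hW f)⟩

/-- Let `H` be a (nontrivial) reproducing kernel Hilbert space of functions on a unimodular
lcsc group `G`, realized through its kernel vectors `ev x = k_x` (so the function associated
to `f ∈ H` is `x ↦ ⟪f, k_x⟫`), with a continuous 2-cocycle `σ`. Assume:
(a) the embedding into `L²(G)` is isometric: `∫ |⟪f, k_x⟫|² dx = ‖f‖²`;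
(b) `σ`-twisted `G`-invariance: every twisted translate of a member of `H` is in `H`;
(c) localization: every member of `H` lies in the Wiener amalgam space `W²(G)`.
Then `(k_λ)_{λ∈Λ}` is a Bessel sequence in `H` if and only if `Λ` is relatively
separated. -/
theorem statement15 {G : Type*} [TopologicalSpace G] [Group G] [IsTopologicalGroup G]
    [T2Space G] [LocallyCompactSpace G] [SecondCountableTopology G]
    [MeasurableSpace G] [BorelSpace G]
    (m : Measure G) [m.IsHaarMeasure] [m.IsMulRightInvariant]
    {H : Type*} [NormedAddCommGroup H] [InnerProductSpace ℂ H] [CompleteSpace H]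
    [Nontrivial H]
    (ev : G → H) (σ : G → G → ℂ)
    (hσnorm : ∀ x y : G, ‖σ x y‖ = 1)
    (hσcont : Continuous fun p : G × G => σ p.1 p.2)
    (hσcocycle : ∀ x y z : G, σ x y * σ (x * y) z = σ x (y * z) * σ y z)
    (hσe : σ 1 1 = 1)
    (hiso : ∀ f : H, ∫⁻ x : G, ((‖⟪f, ev x⟫‖₊ : ℝ≥0∞)) ^ 2 ∂m = (‖f‖₊ : ℝ≥0∞) ^ 2)
    (hinv : ∀ (x : G) (f : H), ∃ g : H, ∀ y : G,
      ⟪g, ev y⟫ = σ x (x⁻¹ * y) * ⟪f, ev (x⁻¹ * y)⟫)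
    (Q : Set G) (hQc : IsCompact Q) (hQ1 : Q ∈ nhds (1 : G))
    (hW : ∀ f : H,
      ∫⁻ x : G, (⨆ t ∈ x • Q, (‖⟪f, ev t⟫‖₊ : ℝ≥0∞)) ^ 2 ∂m < ⊤)
    (Λ : Set G) :
    (∃ B : ℝ≥0∞, B ≠ ⊤ ∧ ∀ f : H,
        ∑' lam : ↥Λ, ((‖⟪f, ev (↑lam : G)⟫‖₊ : ℝ≥0∞)) ^ 2 ≤ B * (‖f‖₊ : ℝ≥0∞) ^ 2) ↔
      RelSep Λ :=
  statement15_general m ev σ hσnorm hiso hinv Q hQc hQ1 hW Λ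
end
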